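/- Let I be a finite nonempty index set, ρ₀ > 0, and a : I → ℝ with a(i) ≥ 0 for all i. Let x : ℕ → I → ℝ satisfy x_n(i) ≥ 2ρ₀ for all n and i, and let c : I → ℝ be such that x_n(i) − n·a(i) → c(i) as n → ∞ for every i ∈ I. Then D(x_n, x_{n+1}) → 0 as n → ∞. (Abstract form of the proposition that for a positive Dehn twist g and any X in Teichmüller space, d_h^Γ(gⁿX, g^{n+1}X) → 0 as n → ∞; in particular the action of g on (T_{g,n}, d_h^Γ) is not isometric when d_h^Γ(X, gX) > 0.) -/

import Mathlib

/-! Each coordinate ratio `x (n+1) i / x n i` tends to `1`: the increments `x (n+1) i - x n i`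
tend to the slope `a i`, and either `a i > 0`, so that `x n i → ∞`, or `a i = 0`, so that
`x n i` converges to `c i ≥ 2ρ₀ > 0`. Since `D(u,v)` is a continuous function of the ratios
`v i / u i` vanishing when all of them equal `1`, `D(x_n, x_{n+1}) → 0`. -/

open Filter

noncomputable def Dtil {I : Type*} [Fintype I] [Nonempty I] (u v : I → ℝ) : ℝ :=
  (1 / 2) * (Finset.univ.sup' Finset.univ_nonempty fun i => Real.log (v i / u i)) +
  (1 / 2) * (Finset.univ.sup' Finset.univ_nonempty fun i => Real.log (u i / v i))

open Topology

theorem tendsto_sub_succ_of_tendsto_sub_mul {y : ℕ → ℝ} {a c : ℝ}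
    (hy : Tendsto (fun n : ℕ => y n - n * a) atTop (𝓝 c)) :
    Tendsto (fun n : ℕ => y (n + 1) - y n) atTop (𝓝 a) := by
  have hshift : Tendsto (fun n : ℕ => y (n + 1) - (n + 1 : ℕ) * a) atTop (𝓝 c) :=
    hy.comp (tendsto_add_atTop_nat 1)
  simpa using ((hshift.sub hy).add_const a).congr fun n => by push_cast; ring

theorem tendsto_div_succ_one_of_tendsto_sub_mul {y : ℕ → ℝ} {m a c : ℝ}
    (hm : 0 < m) (hym : ∀ n, m ≤ y n) (ha : 0 ≤ a)
    (hy : Tendsto (fun n : ℕ => y n - n * a) atTop (𝓝 c)) :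
    Tendsto (fun n : ℕ => y (n + 1) / y n) atTop (𝓝 1) := by
  rcases ha.eq_or_lt with rfl | ha_pos
  · have hlim : Tendsto y atTop (𝓝 c) := by simpa using hy
    have hc : c ≠ 0 := (hm.trans_le (ge_of_tendsto' hlim hym)).ne'
    have hlim_succ : Tendsto (fun n => y (n + 1)) atTop (𝓝 c) :=
      hlim.comp (tendsto_add_atTop_nat 1)
    rw [← div_self hc]
    exact hlim_succ.div hlim hc
  · have hy_top : Tendsto y atTop atTop :=
      (hy.add_atTop (tendsto_natCast_atTop_atTop.atTop_mul_const ha_pos)).congr fun n => by ring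
    have hinc := (tendsto_sub_succ_of_tendsto_sub_mul hy).div_atTop hy_top
    have hone : Tendsto (fun n => 1 + (y (n + 1) - y n) / y n) atTop (𝓝 1) := by
      simpa using hinc.const_add 1
    refine hone.congr fun n => ?_
    have hyn : y n ≠ 0 := (hm.trans_le (hym n)).ne'
    field_simp
    ring

theorem tendsto_Dtil_zero_of_tendsto_div_one {α I : Type*} [Fintype I] [Nonempty I]
    {l : Filter α} {u v : α → I → ℝ}
    (huv : ∀ i, Tendsto (fun t => v t i / u t i) l (𝓝 1)) :
    Tendsto (fun t => Dtil (u t) (v t)) l (𝓝 0) := by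
  have hlog : ∀ i, Tendsto (fun t => Real.log (v t i / u t i)) l (𝓝 0) := fun i => by
    simpa using (huv i).log one_ne_zero
  have hlog_inv : ∀ i, Tendsto (fun t => Real.log (u t i / v t i)) l (𝓝 0) := fun i => by
    simpa using ((huv i).inv₀ one_ne_zero).log (by norm_num)
  have hsup := Tendsto.finset_sup'_nhds_apply Finset.univ_nonempty fun i _ => hlog i
  have hsup_inv := Tendsto.finset_sup'_nhds_apply Finset.univ_nonempty fun i _ => hlog_inv i
  convert (hsup.const_mul (1 / 2)).add (hsup_inv.const_mul (1 / 2)) using 2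
  · rfl
  · simp

/-- Abstract form of the proposition that for a positive Dehn twist `g`,
`d_h^Γ(gⁿX, g^{n+1}X) → 0` as `n → ∞`: if the coordinates `x_n(i) ≥ 2ρ₀` grow
linearly with slopes `a(i) ≥ 0` and asymptotic intercepts `c(i)`, then
`D(x_n, x_{n+1}) → 0`. -/
theorem stmt18 {I : Type*} [Fintype I] [Nonempty I]
    (ρ₀ : ℝ) (hρ₀ : 0 < ρ₀)
    (a : I → ℝ) (ha : ∀ i, 0 ≤ a i)
    (x : ℕ → I → ℝ) (hx : ∀ n i, 2 * ρ₀ ≤ x n i)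
    (c : I → ℝ)
    (hc : ∀ i, Tendsto (fun n : ℕ => x n i - n * a i) atTop (nhds (c i))) :
    Tendsto (fun n : ℕ => Dtil (x n) (x (n + 1))) atTop (nhds 0) :=
  tendsto_Dtil_zero_of_tendsto_div_one fun i =>
    tendsto_div_succ_one_of_tendsto_sub_mul (by positivity) (fun n => hx n i) (ha i) (hc i)
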